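/- arXiv:1902.09004 — 3 statements merged into one kernel-verified Lean document; each statement's English description precedes it below -/
import Mathlib

section
/- Suppose H is a symmetric positive definite n×n matrix, a > 0, b > 0, c < 0, ab - c² > 0, and suppose K_a > 0, K_b < 0, b K_a = c K_b, and K_c = a/c. Then for all (λ, v) ≠ (0, 0) with v ≠ 0, the expression £V = (-a + c K_c)⟨λ, H v⟩ + (-c + b K_c)⟨v, H v⟩ + ⟨cλ + bv, K_a λ + K_b v⟩ is strictly negative; moreover £V ≤ 0 for all (λ, v). -/
/-!
The gain `K_c = a / c` cancels the cross term `⟨λ, H v⟩`, leaving the coefficient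
`(a b - c²) / c < 0` in front of `⟨v, H v⟩`. The relation `b K_a = c K_b` makes `c λ + b v` the
multiple `(c / K_a) (K_a λ + K_b v)` of the second factor, so the last term is `c / K_a` times a
square, hence nonpositive.
-/

open Matrix

lemma smul_add_smul_eq_div_smul {K V : Type*} [Field K] [AddCommGroup V] [Module K V]
    {c b p q : K} (hp : p ≠ 0) (h : b * p = c * q) (x y : V) :
    c • x + b • y = (c / p) • (p • x + q • y) := by
  rw [smul_add, smul_smul, smul_smul, div_mul_cancel₀ c hp, div_mul_eq_mul_div, ← h,
    mul_div_cancel_right₀ b hp]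

lemma dotProduct_smul_add_smul_nonpos {ι K : Type*} [Fintype ι] [Field K] [LinearOrder K]
    [IsStrictOrderedRing K] {c b p q : K} (hc : c ≤ 0) (hp : 0 < p) (h : b * p = c * q)
    (x y : ι → K) :
    (c • x + b • y) ⬝ᵥ (p • x + q • y) ≤ 0 := by
  rw [smul_add_smul_eq_div_smul hp.ne' h, smul_dotProduct, smul_eq_mul]
  exact mul_nonpos_of_nonpos_of_nonneg (div_nonpos_of_nonpos_of_nonneg hc hp.le)
    (Finset.sum_nonneg fun i _ => mul_self_nonneg _)

theorem lie_derivative_negative_general {n : ℕ} (a b c Ka Kb Kc : ℝ)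
    (hc : c < 0) (habc : 0 < a * b - c ^ 2)
    (hKa : 0 < Ka) (hKab : b * Ka = c * Kb) (hKc : Kc = a / c)
    (H : Matrix (Fin n) (Fin n) ℝ) (hH : H.PosDef) :
    ∀ l v : Fin n → ℝ,
      (v ≠ 0 →
        (-a + c * Kc) * (l ⬝ᵥ H.mulVec v)
          + (-c + b * Kc) * (v ⬝ᵥ H.mulVec v)
          + (c • l + b • v) ⬝ᵥ (Ka • l + Kb • v) < 0) ∧
      (-a + c * Kc) * (l ⬝ᵥ H.mulVec v)
        + (-c + b * Kc) * (v ⬝ᵥ H.mulVec v)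
        + (c • l + b • v) ⬝ᵥ (Ka • l + Kb • v) ≤ 0 := by
  intro l v
  have hcross : -a + c * Kc = 0 := by rw [hKc, mul_div_cancel₀ a hc.ne]; ring
  have hdamp : -c + b * Kc < 0 := by
    rw [hKc, show -c + b * (a / c) = (a * b - c ^ 2) / c by field_simp; ring]
    exact div_neg_of_pos_of_neg habc hc
  have hgain := dotProduct_smul_add_smul_nonpos hc.le hKa hKab l v
  rw [hcross, zero_mul, zero_add]
  refine ⟨fun hv => ?_, ?_⟩
  · have hHv : 0 < v ⬝ᵥ H *ᵥ v := by simpa using hH.dotProduct_mulVec_pos hv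
    linarith [mul_neg_of_neg_of_pos hdamp hHv]
  · have hHv : 0 ≤ v ⬝ᵥ H *ᵥ v := by simpa using hH.posSemidef.dotProduct_mulVec_nonneg v
    linarith [mul_nonpos_of_nonpos_of_nonneg hdamp.le hHv]

/-- Proposition 1: under the stated gain conditions the Lie derivative is
strictly negative whenever v ≠ 0, and nonpositive everywhere. -/
theorem lie_derivative_negative {n : ℕ} (a b c Ka Kb Kc : ℝ)
    (ha : 0 < a) (hb : 0 < b) (hc : c < 0) (habc : 0 < a * b - c ^ 2)
    (hKa : 0 < Ka) (hKb : Kb < 0) (hKab : b * Ka = c * Kb) (hKc : Kc = a / c)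
    (H : Matrix (Fin n) (Fin n) ℝ) (hH : H.PosDef) :
    ∀ l v : Fin n → ℝ,
      (v ≠ 0 →
        (-a + c * Kc) * (l ⬝ᵥ H.mulVec v)
          + (-c + b * Kc) * (v ⬝ᵥ H.mulVec v)
          + (c • l + b • v) ⬝ᵥ (Ka • l + Kb • v) < 0) ∧
      (-a + c * Kc) * (l ⬝ᵥ H.mulVec v)
        + (-c + b * Kc) * (v ⬝ᵥ H.mulVec v)
        + (c • l + b • v) ⬝ᵥ (Ka • l + Kb • v) ≤ 0 :=
  lie_derivative_negative_general a b c Ka Kb Kc hc habc hKa hKab hKc H hH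
end

section
/- Suppose x : [0,∞) → ℝ^n solves the continuous accelerated Newton ODE ∇²E(x) ẍ + γ_b ẋ + γ_a ∇E(x) = 0 with γ_a, γ_b > 0, where ∇²E(x(t)) is positive definite for all t. Then the function t ↦ γ_a E(x(t)) + (1/2)⟨ẋ(t), ∇²E(x(t)) ẋ(t)⟩ has derivative -γ_b ‖ẋ(t)‖² + (1/2)⟨ẋ(t), (d/dt ∇²E(x(t))) ẋ(t)⟩; in particular, if E is quadratic (so ∇²E is constant), this energy is nonincreasing. -/
open Set
open scoped InnerProductSpace

/-!
Differentiating the energy and using the symmetry of `∇²E(x)`, the two cross terms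
`⟨ẋ, ∇²E(x) ẍ⟩` combine, and the ODE replaces `∇²E(x) ẍ` by `-γ_b ẋ - γ_a ∇E(x)`; the gradient
term then cancels the derivative `γ_a ⟨∇E(x), ẋ⟩` of the potential part. What remains is the
friction term `-γ_b ‖ẋ‖²` plus the term coming from the time derivative of the inertia.
-/

variable {F : Type*} [NormedAddCommGroup F] [InnerProductSpace ℝ F]

theorem HasGradientAt.hasDerivAt_comp [CompleteSpace F] {f : F → ℝ} {g : F} {x : ℝ → F}
    {v : F} {t : ℝ} (hf : HasGradientAt f g (x t)) (hx : HasDerivAt x v t) :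
    HasDerivAt (fun s => f (x s)) ⟪g, v⟫_ℝ t :=
  hf.hasFDerivAt.comp_hasDerivAt t hx

theorem HasDerivAt.inner_self_clm_apply {A : ℝ → F →L[ℝ] F} {A' : F →L[ℝ] F} {v : ℝ → F}
    {v' : F} {t : ℝ} (hA : HasDerivAt A A' t) (hv : HasDerivAt v v' t)
    (hsymm : (A t : F →ₗ[ℝ] F).IsSymmetric) :
    HasDerivAt (fun s => ⟪v s, A s (v s)⟫_ℝ) (⟪v t, A' (v t)⟫_ℝ + 2 * ⟪v t, A t v'⟫_ℝ) t := by
  have h := hv.inner ℝ (hA.clm_apply hv)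
  have hswap : ⟪v', A t (v t)⟫_ℝ = ⟪v t, A t v'⟫_ℝ :=
    (hsymm v' (v t)).symm.trans (real_inner_comm _ _)
  refine h.congr_deriv ?_
  rw [inner_add_right, hswap]
  ring

noncomputable def newtonEnergy (γ : ℝ) (E : F → ℝ) (x v : ℝ → F) (A : ℝ → F →L[ℝ] F)
    (s : ℝ) : ℝ :=
  γ * E (x s) + (1 / 2) * ⟪v s, A s (v s)⟫_ℝ

theorem hasDerivAt_newtonEnergy [CompleteSpace F] {E : F → ℝ} {γa γb t : ℝ} {x v : ℝ → F}
    {a : F} {A : ℝ → F →L[ℝ] F} {A' : F →L[ℝ] F} (hE : DifferentiableAt ℝ E (x t))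
    (hx : HasDerivAt x (v t) t) (hv : HasDerivAt v a t) (hA : HasDerivAt A A' t)
    (hsymm : (A t : F →ₗ[ℝ] F).IsSymmetric)
    (hode : A t a + γb • v t + γa • gradient E (x t) = 0) :
    HasDerivAt (newtonEnergy γa E x v A) (-γb * ‖v t‖ ^ 2 + (1 / 2) * ⟪v t, A' (v t)⟫_ℝ) t := by
  have hpot := hE.hasGradientAt.hasDerivAt_comp hx
  have hkin := hA.inner_self_clm_apply hv hsymm
  have hAa : A t a = -(γb • v t) - γa • gradient E (x t) := by
    linear_combination (norm := module) hode
  refine ((hpot.const_mul γa).add (hkin.const_mul (1 / 2))).congr_deriv ?_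
  rw [hAa, inner_sub_right, inner_neg_right, inner_smul_right, inner_smul_right,
    real_inner_self_eq_norm_sq, real_inner_comm (v t)]
  ring

theorem accelerated_newton_energy_general {n : ℕ}
    (E : EuclideanSpace ℝ (Fin n) → ℝ) (hE : ContDiff ℝ 3 E)
    (γa γb : ℝ) (hγb : 0 < γb)
    (x x' x'' : ℝ → EuclideanSpace ℝ (Fin n))
    (hx : ∀ t, HasDerivAt x (x' t) t)
    (hx' : ∀ t, HasDerivAt x' (x'' t) t)
    (Hess Hess' : ℝ → (EuclideanSpace ℝ (Fin n) →L[ℝ] EuclideanSpace ℝ (Fin n)))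
    (hHessSymm : ∀ t, ∀ u w : EuclideanSpace ℝ (Fin n),
      ⟪Hess t u, w⟫_ℝ = ⟪u, Hess t w⟫_ℝ)
    (hHess' : ∀ t, HasDerivAt Hess (Hess' t) t)
    (hode : ∀ t ∈ Ici (0 : ℝ),
      Hess t (x'' t) + γb • x' t + γa • gradient E (x t) = 0) :
    (∀ t ∈ Ici (0 : ℝ),
      HasDerivAt (fun s => γa * E (x s) + (1 / 2) * ⟪x' s, Hess s (x' s)⟫_ℝ)
        (-γb * ‖x' t‖ ^ 2 + (1 / 2) * ⟪x' t, Hess' t (x' t)⟫_ℝ) t) ∧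
    ((∀ t, Hess' t = 0) →
      AntitoneOn (fun s => γa * E (x s) + (1 / 2) * ⟪x' s, Hess s (x' s)⟫_ℝ)
        (Ici 0)) := by
  have hderiv : ∀ t ∈ Ici (0 : ℝ), HasDerivAt (newtonEnergy γa E x x' Hess)
      (-γb * ‖x' t‖ ^ 2 + (1 / 2) * ⟪x' t, Hess' t (x' t)⟫_ℝ) t := fun t ht =>
    hasDerivAt_newtonEnergy (hE.differentiable (by norm_num) _) (hx t) (hx' t) (hHess' t)
      (hHessSymm t) (hode t ht)
  refine ⟨hderiv, fun hconst => ?_⟩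
  refine antitoneOn_of_hasDerivWithinAt_nonpos (convex_Ici 0)
    (fun t ht => (hderiv t ht).continuousAt.continuousWithinAt)
    (fun t ht => (hderiv t (interior_subset ht)).hasDerivWithinAt) fun t _ => ?_
  simp only [hconst, zero_apply, inner_zero_right, mul_zero, add_zero]
  have := mul_nonneg hγb.le (sq_nonneg ‖x' t‖)
  linarith

/-- Energy identity for the continuous accelerated Newton ODE
∇²E(x) ẍ + γ_b ẋ + γ_a ∇E(x) = 0: the energy
γ_a E(x) + (1/2)⟨ẋ, ∇²E(x) ẋ⟩ has derivative
-γ_b‖ẋ‖² + (1/2)⟨ẋ, (d/dt ∇²E(x(t))) ẋ⟩; if ∇²E is constant along the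
trajectory the energy is nonincreasing. -/
theorem accelerated_newton_energy {n : ℕ}
    (E : EuclideanSpace ℝ (Fin n) → ℝ) (hE : ContDiff ℝ 3 E)
    (γa γb : ℝ) (hγa : 0 < γa) (hγb : 0 < γb)
    (x x' x'' : ℝ → EuclideanSpace ℝ (Fin n))
    (hx : ∀ t, HasDerivAt x (x' t) t)
    (hx' : ∀ t, HasDerivAt x' (x'' t) t)
    (Hess Hess' : ℝ → (EuclideanSpace ℝ (Fin n) →L[ℝ] EuclideanSpace ℝ (Fin n)))
    (hHess : ∀ t, Hess t = fderiv ℝ (gradient E) (x t))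
    (hHessSymm : ∀ t, ∀ u w : EuclideanSpace ℝ (Fin n),
      ⟪Hess t u, w⟫_ℝ = ⟪u, Hess t w⟫_ℝ)
    (hHessPos : ∀ t, ∀ u : EuclideanSpace ℝ (Fin n), u ≠ 0 → 0 < ⟪u, Hess t u⟫_ℝ)
    (hHess' : ∀ t, HasDerivAt Hess (Hess' t) t)
    (hode : ∀ t ∈ Ici (0 : ℝ),
      Hess t (x'' t) + γb • x' t + γa • gradient E (x t) = 0) :
    (∀ t ∈ Ici (0 : ℝ),
      HasDerivAt (fun s => γa * E (x s) + (1 / 2) * ⟪x' s, Hess s (x' s)⟫_ℝ)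
        (-γb * ‖x' t‖ ^ 2 + (1 / 2) * ⟪x' t, Hess' t (x' t)⟫_ℝ) t) ∧
    ((∀ t, Hess' t = 0) →
      AntitoneOn (fun s => γa * E (x s) + (1 / 2) * ⟪x' s, Hess s (x' s)⟫_ℝ)
        (Ici 0)) :=
  accelerated_newton_energy_general E hE γa γb hγb x x' x'' hx hx' Hess Hess' hHessSymm hHess' hode
end

section
/- Let E(x) = (1/2)⟨x, Q x⟩ with Q symmetric positive definite, and consider the auxiliary system λ̇ = -Q v, v̇ = u with the Nesterov-type control u = γ_a λ - γ_b v - γ_c Q v (γ_a, γ_b, γ_c > 0 with suitable relations b γ_a = -c γ_b, γ_c = -a/c for some a, b > 0, c < 0, ab - c² > 0). Then every solution (λ(t), v(t)) converges to (0, 0) as t → ∞. -/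
/-!
The form V(λ, v) = (a/2)‖λ‖² + (b/2)‖v‖² + c⟨λ, v⟩ is positive definite because ab > c².
Along a solution, c γc = -a cancels the ⟨λ, Qv⟩ terms of V̇, and b γa = -c γb turns the rest into
V̇ = (c/γa)‖γa λ - γb v‖² + ((ab - c²)/c)⟨v, Qv⟩, which is negative definite since c < 0 and
Q ≻ 0. Both forms are continuous and 2-homogeneous, so by compactness of the unit sphere they are
comparable to ‖(λ, v)‖²; hence V̇ ≤ -δ V for some δ > 0, and V, with it (λ, v), decays
exponentially.
-/

open Matrix Filter Topology

lemma le_mul_exp_of_hasDerivAt_le {f f' : ℝ → ℝ} {δ : ℝ} (hf : ∀ t, HasDerivAt f (f' t) t)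
    (hf' : ∀ t, f' t ≤ -δ * f t) {t : ℝ} (ht : 0 ≤ t) : f t ≤ f 0 * Real.exp (-δ * t) := by
  have hg : ∀ s, HasDerivAt (fun s => f s * Real.exp (δ * s))
      ((f' s + δ * f s) * Real.exp (δ * s)) s := fun s =>
    ((hf s).fun_mul ((hasDerivAt_id' s).const_mul δ).exp).congr_deriv (by ring)
  have hanti := antitone_of_hasDerivAt_nonpos hg fun s =>
    mul_nonpos_of_nonpos_of_nonneg (by linarith [hf' s]) (Real.exp_pos _).le
  have h0 : f t * Real.exp (δ * t) ≤ f 0 := by simpa using hanti ht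
  calc f t = f t * Real.exp (δ * t) * Real.exp (-δ * t) := by
        rw [mul_assoc, ← Real.exp_add]; simp
    _ ≤ f 0 * Real.exp (-δ * t) := by gcongr

section HomogeneousFunction

variable {E : Type*} [NormedAddCommGroup E] [NormedSpace ℝ E] {q : E → ℝ}

lemma eq_norm_sq_mul_of_smul (hq : ∀ (r : ℝ) x, q (r • x) = r ^ 2 * q x) (x : E) :
    q x = ‖x‖ ^ 2 * q (‖x‖⁻¹ • x) := by
  rcases eq_or_ne x 0 with rfl | hx
  · simpa using hq 0 0
  · rw [hq, ← mul_assoc, ← mul_pow, mul_inv_cancel₀ (norm_ne_zero_iff.2 hx), one_pow, one_mul]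

variable [FiniteDimensional ℝ E]

lemma exists_pos_mul_norm_sq_le (hc : Continuous q) (hq : ∀ (r : ℝ) x, q (r • x) = r ^ 2 * q x)
    (hpos : ∀ x ≠ 0, 0 < q x) : ∃ m > 0, ∀ x, m * ‖x‖ ^ 2 ≤ q x := by
  obtain ⟨m, hm, hmin⟩ := (isCompact_sphere (0 : E) 1).exists_forall_le' hc.continuousOn
    fun y hy => hpos y (ne_zero_of_mem_unit_sphere ⟨y, hy⟩)
  refine ⟨m, hm, fun x => ?_⟩
  rcases eq_or_ne x 0 with rfl | hx
  · simpa using (hq 0 0).ge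
  · rw [eq_norm_sq_mul_of_smul hq x, mul_comm m]
    gcongr
    exact hmin _ (by simp [norm_smul, hx])

lemma exists_pos_le_mul_norm_sq (hc : Continuous q) (hq : ∀ (r : ℝ) x, q (r • x) = r ^ 2 * q x) :
    ∃ M > 0, ∀ x, q x ≤ M * ‖x‖ ^ 2 := by
  obtain ⟨C, hC⟩ := (isCompact_sphere (0 : E) 1).exists_bound_of_continuousOn hc.continuousOn
  refine ⟨max C 1, by positivity, fun x => ?_⟩
  rcases eq_or_ne x 0 with rfl | hx
  · simpa using (hq 0 0).le
  · rw [eq_norm_sq_mul_of_smul hq x, mul_comm _ (‖x‖ ^ 2)]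
    gcongr
    exact ((le_abs_self _).trans (hC _ (by simp [norm_smul, hx]))).trans (le_max_left _ _)

theorem tendsto_zero_of_hasDerivAt_lyapunov {V D : E → ℝ} (hVc : Continuous V)
    (hVs : ∀ (r : ℝ) x, V (r • x) = r ^ 2 * V x) (hVpos : ∀ x ≠ 0, 0 < V x)
    (hDc : Continuous D) (hDs : ∀ (r : ℝ) x, D (r • x) = r ^ 2 * D x)
    (hDpos : ∀ x ≠ 0, 0 < D x) {x : ℝ → E}
    (hx : ∀ t, HasDerivAt (fun s => V (x s)) (-D (x t)) t) :
    Tendsto x atTop (𝓝 0) := by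
  obtain ⟨m, hm, hVlow⟩ := exists_pos_mul_norm_sq_le hVc hVs hVpos
  obtain ⟨M, hM, hVup⟩ := exists_pos_le_mul_norm_sq hVc hVs
  obtain ⟨β, hβ, hDlow⟩ := exists_pos_mul_norm_sq_le hDc hDs hDpos
  have hdecay : ∀ t, -D (x t) ≤ -(β / M) * V (x t) := fun t => by
    have : β / M * V (x t) ≤ D (x t) := calc
      β / M * V (x t) ≤ β / M * (M * ‖x t‖ ^ 2) := by gcongr; exact hVup _
      _ = β * ‖x t‖ ^ 2 := by field_simp
      _ ≤ D (x t) := hDlow _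
    linarith
  have hsq : Tendsto (fun t => ‖x t‖ ^ 2) atTop (𝓝 0) := by
    have hexp : Tendsto (fun t => V (x 0) / m * Real.exp (-(β / M) * t)) atTop (𝓝 0) := by
      simpa using (Real.tendsto_exp_neg_atTop_nhds_zero.comp
        (tendsto_id.const_mul_atTop (div_pos hβ hM))).const_mul (V (x 0) / m)
    refine squeeze_zero' (.of_forall fun t => by positivity) ?_ hexp
    filter_upwards [eventually_ge_atTop 0] with t ht
    rw [div_mul_eq_mul_div, le_div_iff₀ hm, mul_comm]
    exact (hVlow _).trans (le_mul_exp_of_hasDerivAt_le hx hdecay ht)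
  exact tendsto_zero_iff_norm_tendsto_zero.2 (by simpa using hsq.sqrt)

end HomogeneousFunction

section Nesterov

variable {ι : Type*} [Fintype ι]

lemma dotProduct_self_nonneg (x : ι → ℝ) : 0 ≤ x ⬝ᵥ x := by
  simpa using dotProduct_star_self_nonneg x

lemma dotProduct_self_pos {x : ι → ℝ} (hx : x ≠ 0) : 0 < x ⬝ᵥ x := by
  simpa using dotProduct_star_self_pos_iff.2 hx

theorem HasDerivAt.dotProduct {f g : ℝ → ι → ℝ} {f' g' : ι → ℝ} {t : ℝ}
    (hf : HasDerivAt f f' t) (hg : HasDerivAt g g' t) :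
    HasDerivAt (fun s => f s ⬝ᵥ g s) (f' ⬝ᵥ g t + f t ⬝ᵥ g') t := by
  simpa [_root_.dotProduct, Finset.sum_add_distrib] using
    HasDerivAt.fun_sum fun i _ => (hasDerivAt_pi.1 hf i).mul (hasDerivAt_pi.1 hg i)

noncomputable def nesterovLyapunov (a b c : ℝ) (x : (ι → ℝ) × (ι → ℝ)) : ℝ :=
  a / 2 * (x.1 ⬝ᵥ x.1) + b / 2 * (x.2 ⬝ᵥ x.2) + c * (x.1 ⬝ᵥ x.2)

noncomputable def nesterovDissipation (Q : Matrix ι ι ℝ) (γa γb a b c : ℝ)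
    (x : (ι → ℝ) × (ι → ℝ)) : ℝ :=
  -(c / γa) * ((γa • x.1 - γb • x.2) ⬝ᵥ (γa • x.1 - γb • x.2)) -
    (a * b - c ^ 2) / c * (x.2 ⬝ᵥ Q *ᵥ x.2)

variable {Q : Matrix ι ι ℝ} {γa γb γc a b c : ℝ}

lemma continuous_nesterovLyapunov : Continuous (nesterovLyapunov (ι := ι) a b c) := by
  unfold nesterovLyapunov; fun_prop

lemma nesterovLyapunov_smul (r : ℝ) (x : (ι → ℝ) × (ι → ℝ)) :
    nesterovLyapunov a b c (r • x) = r ^ 2 * nesterovLyapunov a b c x := by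
  simp only [nesterovLyapunov, Prod.smul_fst, Prod.smul_snd, smul_dotProduct, dotProduct_smul,
    smul_eq_mul]
  ring

lemma nesterovLyapunov_pos (hb : 0 < b) (habc : 0 < a * b - c ^ 2) {x : (ι → ℝ) × (ι → ℝ)}
    (hx : x ≠ 0) : 0 < nesterovLyapunov a b c x := by
  obtain ⟨y, z⟩ := x
  have hsq : 2 * b * nesterovLyapunov a b c (y, z) =
      (c • y + b • z) ⬝ᵥ (c • y + b • z) + (a * b - c ^ 2) * (y ⬝ᵥ y) := by
    simp only [nesterovLyapunov, add_dotProduct, dotProduct_add, smul_dotProduct,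
      dotProduct_smul, smul_eq_mul, dotProduct_comm z y]
    ring
  rcases eq_or_ne y 0 with rfl | hy
  · have hz : z ≠ 0 := by simpa using hx
    simpa [nesterovLyapunov] using mul_pos (half_pos hb) (dotProduct_self_pos hz)
  · have := dotProduct_self_nonneg (c • y + b • z)
    have := mul_pos habc (dotProduct_self_pos hy)
    nlinarith

lemma continuous_nesterovDissipation :
    Continuous (nesterovDissipation Q γa γb a b c) := by
  unfold nesterovDissipation; fun_prop

lemma nesterovDissipation_smul (r : ℝ) (x : (ι → ℝ) × (ι → ℝ)) :
    nesterovDissipation Q γa γb a b c (r • x) = r ^ 2 * nesterovDissipation Q γa γb a b c x := by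
  simp only [nesterovDissipation, Prod.smul_fst, Prod.smul_snd, smul_comm _ r, ← smul_sub,
    smul_dotProduct, dotProduct_smul, mulVec_smul, smul_eq_mul]
  ring

lemma nesterovDissipation_pos (hQ : Q.PosDef) (hγa : 0 < γa) (hc : c < 0)
    (habc : 0 < a * b - c ^ 2) {x : (ι → ℝ) × (ι → ℝ)} (hx : x ≠ 0) :
    0 < nesterovDissipation Q γa γb a b c x := by
  obtain ⟨y, z⟩ := x
  have hcγa : 0 < -(c / γa) := neg_pos.2 (div_neg_of_neg_of_pos hc hγa)
  have hκ : 0 < -((a * b - c ^ 2) / c) := neg_pos.2 (div_neg_of_pos_of_neg habc hc)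
  rcases eq_or_ne z 0 with rfl | hz
  · have hy : γa • y ≠ 0 := smul_ne_zero hγa.ne' (by simpa using hx)
    simpa [nesterovDissipation] using mul_pos hcγa (dotProduct_self_pos hy)
  · have := mul_nonneg hcγa.le (dotProduct_self_nonneg (γa • y - γb • z))
    have := mul_pos hκ (by simpa using hQ.dotProduct_mulVec_pos hz)
    simp only [nesterovDissipation]
    linarith

lemma hasDerivAt_nesterovLyapunov (hγa : γa ≠ 0) (hc : c ≠ 0) (hrel1 : b * γa = -c * γb)
    (hrel2 : γc = -a / c)
    {l v : ℝ → ι → ℝ} {t : ℝ} (hl : HasDerivAt l (-(Q *ᵥ v t)) t)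
    (hv : HasDerivAt v (γa • l t - γb • v t - γc • Q *ᵥ v t) t) :
    HasDerivAt (fun s => nesterovLyapunov a b c (l s, v s))
      (-nesterovDissipation Q γa γb a b c (l t, v t)) t := by
  refine ((((hl.dotProduct hl).const_mul (a / 2)).add ((hv.dotProduct hv).const_mul (b / 2))).add
    ((hl.dotProduct hv).const_mul c)).congr_deriv ?_
  simp only [nesterovDissipation, neg_dotProduct, dotProduct_neg, sub_dotProduct, dotProduct_sub,
    smul_dotProduct, dotProduct_smul, smul_eq_mul, dotProduct_comm (Q *ᵥ v t),
    dotProduct_comm (v t) (l t)]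
  subst hrel2
  field_simp
  linear_combination 2 * c * (γa * (l t ⬝ᵥ v t) - γb * (v t ⬝ᵥ v t)) * hrel1

end Nesterov

theorem nesterov_quadratic_convergence_general {n : ℕ}
    (Q : Matrix (Fin n) (Fin n) ℝ) (hQ : Q.PosDef)
    (γa γb γc a b c : ℝ) (hγa : 0 < γa)
    (hb : 0 < b) (hc : c < 0) (habc : 0 < a * b - c ^ 2)
    (hrel1 : b * γa = -c * γb) (hrel2 : γc = -a / c)
    (l v : ℝ → (Fin n → ℝ))
    (hl : ∀ t, HasDerivAt l (-(Q.mulVec (v t))) t)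
    (hv : ∀ t, HasDerivAt v (γa • l t - γb • v t - γc • Q.mulVec (v t)) t) :
    Tendsto l atTop (nhds 0) ∧ Tendsto v atTop (nhds 0) :=
  Prod.tendsto_iff _ _ |>.1 <| tendsto_zero_of_hasDerivAt_lyapunov continuous_nesterovLyapunov
    nesterovLyapunov_smul (fun _ => nesterovLyapunov_pos hb habc) continuous_nesterovDissipation
    nesterovDissipation_smul (fun _ => nesterovDissipation_pos hQ hγa hc habc)
    fun t => hasDerivAt_nesterovLyapunov hγa.ne' hc.ne hrel1 hrel2 (hl t) (hv t)

/-- For quadratic E(x) = (1/2)⟨x, Qx⟩, solutions of the closed-loop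
Nesterov-type system λ̇ = -Qv, v̇ = γ_a λ - γ_b v - γ_c Q v converge to
(0, 0) under the stated parameter relations. -/
theorem nesterov_quadratic_convergence {n : ℕ}
    (Q : Matrix (Fin n) (Fin n) ℝ) (hQ : Q.PosDef)
    (γa γb γc a b c : ℝ) (hγa : 0 < γa) (hγb : 0 < γb) (hγc : 0 < γc)
    (ha : 0 < a) (hb : 0 < b) (hc : c < 0) (habc : 0 < a * b - c ^ 2)
    (hrel1 : b * γa = -c * γb) (hrel2 : γc = -a / c)
    (l v : ℝ → (Fin n → ℝ))
    (hl : ∀ t, HasDerivAt l (-(Q.mulVec (v t))) t)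
    (hv : ∀ t, HasDerivAt v (γa • l t - γb • v t - γc • Q.mulVec (v t)) t) :
    Tendsto l atTop (nhds 0) ∧ Tendsto v atTop (nhds 0) :=
  nesterov_quadratic_convergence_general Q hQ γa γb γc a b c hγa hb hc habc hrel1 hrel2 l v hl hv
end
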